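/- arXiv:2102.04061 — 2 statements merged into one kernel-verified Lean document; each statement's English description precedes it below -/
import Mathlib

section
/- Let b : ℝ^d → ℝ^d and σ : ℝ^d → ℝ^{d×d} be globally Lipschitz with constant L and satisfy |b(0)| + |σ(0)| ≤ L, and suppose σ(x) is invertible for every x ∈ ℝ^d. Define A(φ) = (1/2)∫₀^T |σ(φ(t))^{-1}(φ'(t) − b(φ(t)))|² dt for φ ∈ H¹_{x₀}(0,T;ℝ^d). Then there exists a constant C₀ > 0, depending only on x₀, T and L, such that ‖φ‖_{H¹} ≤ C₀ e^{C₀ A(φ)} for every φ ∈ H¹_{x₀}(0,T;ℝ^d). -/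
/-!
Write `u = σ(φ)⁻¹ (φ' - b(φ))`; it lies in `L²` because `t ↦ σ(φ t)⁻¹` is continuous, hence
bounded, on `[0, T]`. Then `φ' = b(φ) + σ(φ) u`, so by linear growth
`‖φ'‖ ≤ L (1 + ‖u‖) (1 + ‖φ‖)`. Since `φ = x₀ + ∫ φ'`, Grönwall's inequality bounds `1 + ‖φ‖` by
`(1 + ‖x₀‖) exp (2 ∫ L (1 + ‖u‖) + 2)`, and `∫ ‖u‖ ≤ (T + ∫ ‖u‖²) / 2 = (T + 2 A(φ)) / 2`.
Squaring the pointwise bound and integrating gives `‖φ'‖²_{L²} ≲ (T + 2 A(φ)) e^{c A(φ)}`.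
The integral Grönwall inequality is proved by a doubling argument: on any interval where
`∫ w ≤ 1/2`, the quantity `a + ∫ w g` at most doubles.
-/

open MeasureTheory Set

theorem MeasureTheory.IntegrableOn.intervalIntegrable_of_mem_Icc {E : Type*} [NormedAddCommGroup E]
    {f : ℝ → E} {a b x y : ℝ} (hf : IntegrableOn f (Icc a b)) (hx : x ∈ Icc a b)
    (hy : y ∈ Icc a b) : IntervalIntegrable f volume x y :=
  (hf.mono_set (uIcc_subset_Icc hx hy)).intervalIntegrable

section Gronwall

variable {w g : ℝ → ℝ} {a T : ℝ}

/- With `F t = a + ∫₀ᵗ w g`, we have `g ≤ F ≤ F t` on `[s, t]`, so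
`F t ≤ F s + (∫ₛᵗ w) F t ≤ F s + F t / 2`. -/
lemma add_integral_mul_le_two_mul
    (hw : ∀ t ∈ Icc 0 T, 0 ≤ w t) (hg : ∀ t ∈ Icc 0 T, 0 ≤ g t)
    (hw_int : IntegrableOn w (Icc 0 T)) (hwg_int : IntegrableOn (fun t => w t * g t) (Icc 0 T))
    (hle : ∀ t ∈ Icc 0 T, g t ≤ a + ∫ s in (0 : ℝ)..t, w s * g s)
    {s t : ℝ} (hs : 0 ≤ s) (hst : s ≤ t) (ht : t ≤ T)
    (hwst : ∫ r in s..t, w r ≤ 1 / 2) :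
    a + ∫ r in (0 : ℝ)..t, w r * g r ≤ 2 * (a + ∫ r in (0 : ℝ)..s, w r * g r) := by
  have hmem : ∀ {r}, r ∈ Icc s t → r ∈ Icc 0 T := fun hr => ⟨hs.trans hr.1, hr.2.trans ht⟩
  have hwg_nonneg : ∀ r ∈ Icc 0 T, 0 ≤ w r * g r := fun r hr => mul_nonneg (hw r hr) (hg r hr)
  set F : ℝ → ℝ := fun r => a + ∫ x in (0 : ℝ)..r, w x * g x
  have hF_mono : ∀ r ∈ Icc s t, F r ≤ F t := fun r hr => by
    have := intervalIntegral.integral_mono_interval le_rfl (hs.trans hr.1) hr.2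
      ((ae_restrict_iff' measurableSet_Ioc).2 (ae_of_all _ fun x hx =>
        hwg_nonneg x ⟨hx.1.le, hx.2.trans ht⟩))
      (hwg_int.intervalIntegrable_of_mem_Icc ⟨le_rfl, hs.trans (hst.trans ht)⟩ ⟨hs.trans hst, ht⟩)
    simp only [F]; linarith
  have hFt_nonneg : 0 ≤ F t := (hg t (hmem ⟨hst, le_rfl⟩)).trans (hle t (hmem ⟨hst, le_rfl⟩))
  have hsplit : F t = F s + ∫ r in s..t, w r * g r := by
    simp only [F, add_assoc]
    rw [intervalIntegral.integral_add_adjacent_intervals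
      (hwg_int.intervalIntegrable_of_mem_Icc ⟨le_rfl, hs.trans (hst.trans ht)⟩ (hmem ⟨le_rfl, hst⟩))
      (hwg_int.intervalIntegrable_of_mem_Icc (hmem ⟨le_rfl, hst⟩) (hmem ⟨hst, le_rfl⟩))]
  have htail : ∫ r in s..t, w r * g r ≤ (∫ r in s..t, w r) * F t := by
    rw [← intervalIntegral.integral_mul_const]
    refine intervalIntegral.integral_mono_on hst
      (hwg_int.intervalIntegrable_of_mem_Icc (hmem ⟨le_rfl, hst⟩) (hmem ⟨hst, le_rfl⟩))
      ((hw_int.intervalIntegrable_of_mem_Icc (hmem ⟨le_rfl, hst⟩)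
        (hmem ⟨hst, le_rfl⟩)).mul_const _) fun r hr => ?_
    exact mul_le_mul_of_nonneg_left ((hle r (hmem hr)).trans (hF_mono r hr)) (hw r (hmem hr))
  have := mul_le_mul_of_nonneg_right hwst hFt_nonneg
  change F t ≤ 2 * F s
  linarith

lemma add_integral_mul_le_two_pow_mul
    (hw : ∀ t ∈ Icc 0 T, 0 ≤ w t) (hg : ∀ t ∈ Icc 0 T, 0 ≤ g t)
    (hw_int : IntegrableOn w (Icc 0 T)) (hwg_int : IntegrableOn (fun t => w t * g t) (Icc 0 T))
    (hle : ∀ t ∈ Icc 0 T, g t ≤ a + ∫ s in (0 : ℝ)..t, w s * g s)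
    (n : ℕ) {t : ℝ} (ht : t ∈ Icc 0 T)
    (hwt : ∫ r in (0 : ℝ)..t, w r ≤ n / 2) :
    a + ∫ r in (0 : ℝ)..t, w r * g r ≤ 2 ^ (n + 1) * a := by
  have ha : 0 ≤ a := by
    simpa using (hg 0 ⟨le_rfl, ht.1.trans ht.2⟩).trans (hle 0 ⟨le_rfl, ht.1.trans ht.2⟩)
  induction n generalizing t with
  | zero =>
    simpa using add_integral_mul_le_two_mul hw hg hw_int hwg_int hle le_rfl ht.1 ht.2
      (by norm_num at hwt; linarith)
  | succ n ih =>
    by_cases hwt' : ∫ r in (0 : ℝ)..t, w r ≤ n / 2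
    · calc _ ≤ 2 ^ (n + 1) * a := ih ht hwt'
        _ ≤ 2 ^ (n + 1 + 1) * a := by gcongr <;> norm_num
    rw [not_le] at hwt'
    have hW_cont : ContinuousOn (fun r => ∫ x in (0 : ℝ)..r, w x) (Icc 0 t) := by
      simpa [uIcc_of_le ht.1] using intervalIntegral.continuousOn_primitive_interval
        (hw_int.mono_set (uIcc_subset_Icc ⟨le_rfl, ht.1.trans ht.2⟩ ht))
    obtain ⟨s, hs, hWs⟩ := intermediate_value_Icc ht.1 hW_cont
      (by simpa using ⟨by positivity, hwt'.le⟩ : (n / 2 : ℝ) ∈ Icc _ _)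
    have hsT : s ∈ Icc 0 T := ⟨hs.1, hs.2.trans ht.2⟩
    have hwst : ∫ r in s..t, w r ≤ 1 / 2 := by
      rw [← intervalIntegral.integral_interval_sub_left
        (hw_int.intervalIntegrable_of_mem_Icc ⟨le_rfl, ht.1.trans ht.2⟩ ht)
        (hw_int.intervalIntegrable_of_mem_Icc ⟨le_rfl, ht.1.trans ht.2⟩ hsT)]
      push_cast at hwt
      simp only at hWs
      linarith
    calc _ ≤ 2 * (a + ∫ r in (0 : ℝ)..s, w r * g r) :=
          add_integral_mul_le_two_mul hw hg hw_int hwg_int hle hs.1 hs.2 ht.2 hwst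
      _ ≤ 2 * (2 ^ (n + 1) * a) := by gcongr; exact ih hsT hWs.le
      _ = 2 ^ (n + 1 + 1) * a := by ring

/- Use `⌈2 ∫₀ᵗ w⌉` doublings, and `2 ^ (n + 1) ≤ exp (n + 1)`. -/
theorem le_mul_exp_of_le_add_integral_mul
    (hw : ∀ t ∈ Icc 0 T, 0 ≤ w t) (hg : ∀ t ∈ Icc 0 T, 0 ≤ g t)
    (hw_int : IntegrableOn w (Icc 0 T)) (hwg_int : IntegrableOn (fun t => w t * g t) (Icc 0 T))
    (hle : ∀ t ∈ Icc 0 T, g t ≤ a + ∫ s in (0 : ℝ)..t, w s * g s)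
    {t : ℝ} (ht : t ∈ Icc 0 T) :
    g t ≤ a * Real.exp (2 * (∫ s in (0 : ℝ)..T, w s) + 2) := by
  set n := ⌈2 * ∫ s in (0 : ℝ)..t, w s⌉₊
  have hWt_nonneg : 0 ≤ ∫ s in (0 : ℝ)..t, w s :=
    intervalIntegral.integral_nonneg ht.1 fun s hs => hw s ⟨hs.1, hs.2.trans ht.2⟩
  have hWt_le : ∫ s in (0 : ℝ)..t, w s ≤ ∫ s in (0 : ℝ)..T, w s :=
    intervalIntegral.integral_mono_interval le_rfl ht.1 ht.2
      ((ae_restrict_iff' measurableSet_Ioc).2 (ae_of_all _ fun x hx => hw x ⟨hx.1.le, hx.2⟩))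
      (hw_int.intervalIntegrable_of_mem_Icc ⟨le_rfl, ht.1.trans ht.2⟩ ⟨ht.1.trans ht.2, le_rfl⟩)
  have hn : (n : ℝ) < 2 * (∫ s in (0 : ℝ)..t, w s) + 1 :=
    Nat.ceil_lt_add_one (by positivity : (0 : ℝ) ≤ 2 * ∫ s in (0 : ℝ)..t, w s)
  have ha : 0 ≤ a := by
    simpa using (hg 0 ⟨le_rfl, ht.1.trans ht.2⟩).trans (hle 0 ⟨le_rfl, ht.1.trans ht.2⟩)
  have hpow : (2 : ℝ) ^ (n + 1) ≤ Real.exp (2 * (∫ s in (0 : ℝ)..T, w s) + 2) :=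
    calc (2 : ℝ) ^ (n + 1) ≤ Real.exp 1 ^ (n + 1) := by
          gcongr; linarith [Real.add_one_le_exp (1 : ℝ)]
      _ = Real.exp (n + 1) := by rw [← Real.exp_nat_mul]; push_cast; ring_nf
      _ ≤ _ := Real.exp_le_exp.2 (by linarith)
  calc g t ≤ a + ∫ s in (0 : ℝ)..t, w s * g s := hle t ht
    _ ≤ 2 ^ (n + 1) * a := add_integral_mul_le_two_pow_mul hw hg hw_int hwg_int hle n ht
        (by linarith [Nat.le_ceil (2 * ∫ s in (0 : ℝ)..t, w s)])
    _ ≤ a * Real.exp (2 * (∫ s in (0 : ℝ)..T, w s) + 2) := by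
        rw [mul_comm]; exact mul_le_mul_of_nonneg_left hpow ha

end Gronwall

theorem LipschitzWith.norm_le_mul_one_add_norm {E F : Type*} [SeminormedAddCommGroup E]
    [SeminormedAddCommGroup F] {f : E → F} {K : NNReal} (hf : LipschitzWith K f)
    (h0 : ‖f 0‖ ≤ K) (x : E) : ‖f x‖ ≤ K * (1 + ‖x‖) := by
  have := hf.norm_sub_le x 0
  rw [sub_zero] at this
  linarith [norm_le_insert' (f x) (f 0)]

theorem norm_le_of_isUnit_of_linear_growth {E : Type*} [NormedAddCommGroup E] [NormedSpace ℝ E]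
    {b : E → E} {σ : E → E →L[ℝ] E} {L : ℝ} (hb : ∀ x, ‖b x‖ ≤ L * (1 + ‖x‖))
    (hσ : ∀ x, ‖σ x‖ ≤ L * (1 + ‖x‖)) {x : E} (hx : IsUnit (σ x)) (y : E) :
    ‖y‖ ≤ L * (1 + ‖Ring.inverse (σ x) (y - b x)‖) * (1 + ‖x‖) := by
  have hy : y = b x + σ x (Ring.inverse (σ x) (y - b x)) := by
    rw [← mul_apply_eq_comp, Ring.mul_inverse_cancel _ hx, one_apply_eq_self, add_sub_cancel]
  calc ‖y‖ ≤ ‖b x‖ + ‖σ x‖ * ‖Ring.inverse (σ x) (y - b x)‖ := by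
        conv_lhs => rw [hy]
        exact (norm_add_le _ _).trans (by gcongr; exact (σ x).le_opNorm _)
    _ ≤ L * (1 + ‖x‖) + L * (1 + ‖x‖) * ‖Ring.inverse (σ x) (y - b x)‖ := by
        gcongr
        exacts [hb x, hσ x]
    _ = L * (1 + ‖Ring.inverse (σ x) (y - b x)‖) * (1 + ‖x‖) := by ring

theorem ContinuousOn.ring_inverse {α R : Type*} [TopologicalSpace α] [NormedRing R]
    [HasSummableGeomSeries R] {f : α → R} {s : Set α} (hf : ContinuousOn f s)
    (hu : ∀ x ∈ s, IsUnit (f x)) : ContinuousOn (fun x => Ring.inverse (f x)) s := fun x hx => by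
  obtain ⟨u, hu⟩ := hu x hx
  exact (hu ▸ NormedRing.inverse_continuousAt u).comp_continuousWithinAt (hf x hx)

theorem ContinuousOn.memLp_top_restrict {α E : Type*} [TopologicalSpace α] [MeasurableSpace α]
    [OpensMeasurableSpace α] [NormedAddCommGroup E] {f : α → E} {s : Set α} {μ : Measure α}
    (hf : ContinuousOn f s) (hs : IsCompact s) (hs' : MeasurableSet s) :
    MemLp f ⊤ (μ.restrict s) := by
  obtain ⟨C, hC⟩ := hs.exists_bound_of_continuousOn hf
  exact memLp_top_of_bound (hf.aestronglyMeasurable_of_isCompact hs hs') C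
    (ae_restrict_of_forall_mem hs' hC)

section Path

variable {E : Type*} [NormedAddCommGroup E] [NormedSpace ℝ E] {φ φ' : ℝ → E} {x₀ : E} {T : ℝ}

theorem continuousOn_of_eq_add_integral (hT : 0 ≤ T) (hφ' : IntegrableOn φ' (Icc 0 T))
    (hφ : ∀ t ∈ Icc 0 T, φ t = x₀ + ∫ s in (0 : ℝ)..t, φ' s) : ContinuousOn φ (Icc 0 T) := by
  have := intervalIntegral.continuousOn_primitive_interval (μ := volume) (a := 0) (b := T)
    (by rwa [uIcc_of_le hT])
  rw [uIcc_of_le hT] at this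
  exact (continuousOn_const.add this).congr hφ

theorem one_add_norm_le_of_eq_add_integral {w : ℝ → ℝ} (hT : 0 ≤ T)
    (hφ' : IntegrableOn φ' (Icc 0 T)) (hφ : ∀ t ∈ Icc 0 T, φ t = x₀ + ∫ s in (0 : ℝ)..t, φ' s)
    (hw : ∀ t ∈ Icc 0 T, 0 ≤ w t) (hw_int : IntegrableOn w (Icc 0 T))
    (hφ'w : ∀ t ∈ Icc 0 T, ‖φ' t‖ ≤ w t * (1 + ‖φ t‖)) {t : ℝ} (ht : t ∈ Icc 0 T) :
    1 + ‖φ t‖ ≤ (1 + ‖x₀‖) * Real.exp (2 * (∫ s in (0 : ℝ)..T, w s) + 2) := by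
  have hφ_cont := continuousOn_of_eq_add_integral hT hφ' hφ
  refine le_mul_exp_of_le_add_integral_mul (g := fun t => 1 + ‖φ t‖) hw
    (fun _ _ => by positivity) hw_int
    (hw_int.mul_continuousOn (continuousOn_const.add hφ_cont.norm) isCompact_Icc)
    (fun t ht => ?_) ht
  have h0 : (0 : ℝ) ∈ Icc 0 T := ⟨le_rfl, ht.1.trans ht.2⟩
  calc 1 + ‖φ t‖ ≤ 1 + ‖x₀‖ + ∫ s in (0 : ℝ)..t, ‖φ' s‖ := by
        rw [hφ t ht, add_assoc]
        gcongr
        exact (norm_add_le _ _).trans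
          (add_le_add_right (intervalIntegral.norm_integral_le_integral_norm ht.1) _)
    _ ≤ 1 + ‖x₀‖ + ∫ s in (0 : ℝ)..t, w s * (1 + ‖φ s‖) := by
        gcongr
        exact intervalIntegral.integral_mono_on ht.1
          (IntegrableOn.intervalIntegrable_of_mem_Icc hφ'.norm h0 ht)
          ((hw_int.mul_continuousOn (continuousOn_const.add hφ_cont.norm)
            isCompact_Icc).intervalIntegrable_of_mem_Icc h0 ht)
          fun s hs => hφ'w s ⟨hs.1, hs.2.trans ht.2⟩

theorem sqrt_integral_norm_sq_le {F : Type*} [NormedAddCommGroup F] {u : ℝ → F} {L : ℝ}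
    (hT : 0 ≤ T) (hL : 0 ≤ L) (hφ' : IntegrableOn φ' (Icc 0 T))
    (hφ : ∀ t ∈ Icc 0 T, φ t = x₀ + ∫ s in (0 : ℝ)..t, φ' s)
    (hu : MemLp u 2 (volume.restrict (Icc 0 T)))
    (hφ'u : ∀ t ∈ Icc 0 T, ‖φ' t‖ ≤ L * (1 + ‖u t‖) * (1 + ‖φ t‖)) :
    Real.sqrt (∫ t in (0 : ℝ)..T, ‖φ' t‖ ^ 2) ≤
      2 * L * (1 + ‖x₀‖) * (1 + T) * Real.exp (3 * L * T + 2) *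
        Real.exp ((2 * L + 2) * ((1 / 2) * ∫ t in (0 : ℝ)..T, ‖u t‖ ^ 2)) := by
  set J := ∫ t in (0 : ℝ)..T, ‖u t‖ ^ 2
  have hJ : 0 ≤ J := intervalIntegral.integral_nonneg hT fun _ _ => by positivity
  have hu_sq : IntegrableOn (fun t => ‖u t‖ ^ 2) (Icc 0 T) :=
    (memLp_two_iff_integrable_sq_norm hu.1).1 hu
  have hdom_int (c : ℝ) : IntegrableOn (fun t => c + ‖u t‖ ^ 2) (Icc 0 T) :=
    (integrable_const c).add hu_sq
  have hdom (c : ℝ) : ∫ t in (0 : ℝ)..T, (c + ‖u t‖ ^ 2) = c * T + J := by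
    rw [intervalIntegral.integral_add intervalIntegrable_const
      (hu_sq.intervalIntegrable_of_mem_Icc ⟨le_rfl, hT⟩ ⟨hT, le_rfl⟩)]
    simp [J, mul_comm]
  have hw_int : IntegrableOn (fun t => L * (1 + ‖u t‖)) (Icc 0 T) :=
    ((integrable_const 1).add (hu.integrable one_le_two).norm).const_mul L
  have hW : ∫ t in (0 : ℝ)..T, L * (1 + ‖u t‖) ≤ L / 2 * (3 * T + J) := by
    calc ∫ t in (0 : ℝ)..T, L * (1 + ‖u t‖) ≤ ∫ t in (0 : ℝ)..T, L / 2 * (3 + ‖u t‖ ^ 2) :=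
          intervalIntegral.integral_mono_on hT
            (hw_int.intervalIntegrable_of_mem_Icc ⟨le_rfl, hT⟩ ⟨hT, le_rfl⟩)
            (((hdom_int 3).intervalIntegrable_of_mem_Icc ⟨le_rfl, hT⟩ ⟨hT, le_rfl⟩).const_mul _)
            fun t _ => by nlinarith [sq_nonneg (‖u t‖ - 1)]
      _ = L / 2 * (3 * T + J) := by rw [intervalIntegral.integral_const_mul, hdom]
  set B := (1 + ‖x₀‖) * Real.exp (2 * (∫ t in (0 : ℝ)..T, L * (1 + ‖u t‖)) + 2)
  have hφB : ∀ t ∈ Icc 0 T, ‖φ' t‖ ≤ L * (1 + ‖u t‖) * B := fun t ht =>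
    (hφ'u t ht).trans (by
      gcongr
      exact one_add_norm_le_of_eq_add_integral hT hφ' hφ (fun _ _ => by positivity) hw_int
        hφ'u ht)
  have hpt : ∀ t ∈ Icc 0 T, ‖φ' t‖ ^ 2 ≤ 2 * (L * B) ^ 2 * (1 + ‖u t‖ ^ 2) := fun t ht =>
    calc ‖φ' t‖ ^ 2 ≤ (L * B) ^ 2 * (1 + ‖u t‖) ^ 2 := by
          rw [← mul_pow]; gcongr; linarith [hφB t ht]
      _ ≤ 2 * (L * B) ^ 2 * (1 + ‖u t‖ ^ 2) := by nlinarith [sq_nonneg (‖u t‖ - 1)]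
  have hφ'_sq : IntegrableOn (fun t => ‖φ' t‖ ^ 2) (Icc 0 T) :=
    ((hdom_int 1).const_mul (2 * (L * B) ^ 2)).mono' (hφ'.1.norm.pow 2)
      (ae_restrict_of_forall_mem measurableSet_Icc fun t ht => by
        rw [Real.norm_of_nonneg (by positivity)]; exact hpt t ht)
  have hI : ∫ t in (0 : ℝ)..T, ‖φ' t‖ ^ 2 ≤ 2 * (L * B) ^ 2 * (T + J) :=
    (intervalIntegral.integral_mono_on hT
      (hφ'_sq.intervalIntegrable_of_mem_Icc ⟨le_rfl, hT⟩ ⟨hT, le_rfl⟩)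
      (((hdom_int 1).intervalIntegrable_of_mem_Icc ⟨le_rfl, hT⟩ ⟨hT, le_rfl⟩).const_mul _)
      hpt).trans_eq (by rw [intervalIntegral.integral_const_mul, hdom, one_mul])
  have hTJ : T + J ≤ 2 * ((1 + T) * Real.exp J) ^ 2 := by
    have h1 : (1 + T) * (1 + J) ≤ (1 + T) * Real.exp J := by
      gcongr; linarith [Real.add_one_le_exp J]
    nlinarith [mul_nonneg hT hJ]
  have hBJ : B * Real.exp J ≤
      (1 + ‖x₀‖) * Real.exp (3 * L * T + 2) * Real.exp ((2 * L + 2) * ((1 / 2) * J)) :=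
    calc B * Real.exp J
        = (1 + ‖x₀‖) * Real.exp (2 * (∫ t in (0 : ℝ)..T, L * (1 + ‖u t‖)) + 2 + J) := by
          rw [Real.exp_add, ← mul_assoc]
      _ ≤ (1 + ‖x₀‖) * Real.exp (3 * L * T + 2 + (2 * L + 2) * ((1 / 2) * J)) := by
          gcongr (1 + ‖x₀‖) * Real.exp ?_
          linarith
      _ = _ := by rw [Real.exp_add]; ring
  rw [Real.sqrt_le_left (by positivity)]
  calc ∫ t in (0 : ℝ)..T, ‖φ' t‖ ^ 2 ≤ 2 * (L * B) ^ 2 * (T + J) := hI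
    _ ≤ (2 * L * (1 + T) * (B * Real.exp J)) ^ 2 := by
        nlinarith [mul_le_mul_of_nonneg_left hTJ (sq_nonneg (L * B))]
    _ ≤ (2 * L * (1 + T) * ((1 + ‖x₀‖) * Real.exp (3 * L * T + 2) *
          Real.exp ((2 * L + 2) * ((1 / 2) * J)))) ^ 2 := by gcongr
    _ = _ := by ring

end Path

theorem H1_norm_bounded_by_A_general
    (d : ℕ) (T : ℝ) (hT : 0 < T)
    (x₀ : EuclideanSpace ℝ (Fin d)) (L : NNReal) :
    ∃ C₀ : ℝ, 0 < C₀ ∧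
      ∀ (b : EuclideanSpace ℝ (Fin d) → EuclideanSpace ℝ (Fin d))
        (σ : EuclideanSpace ℝ (Fin d) →
          (EuclideanSpace ℝ (Fin d) →L[ℝ] EuclideanSpace ℝ (Fin d))),
        LipschitzWith L b → LipschitzWith L σ → ‖b 0‖ + ‖σ 0‖ ≤ (L : ℝ) →
        (∀ x, IsUnit (σ x)) →
        ∀ φ φ' : ℝ → EuclideanSpace ℝ (Fin d),
          IntegrableOn φ' (Icc 0 T) →
          IntegrableOn (fun t => ‖φ' t‖ ^ 2) (Icc 0 T) →
          (∀ t ∈ Icc (0 : ℝ) T, φ t = x₀ + ∫ s in (0 : ℝ)..t, φ' s) →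
          Real.sqrt (∫ t in (0 : ℝ)..T, ‖φ' t‖ ^ 2) ≤
            C₀ * Real.exp (C₀ * ((1 / 2) * ∫ t in (0 : ℝ)..T,
              ‖(Ring.inverse (σ (φ t))) (φ' t - b (φ t))‖ ^ 2)) := by
  set K : ℝ := 2 * L * (1 + ‖x₀‖) * (1 + T) * Real.exp (3 * L * T + 2)
  have hK : 0 ≤ K := by positivity
  refine ⟨K + (2 * L + 2), by positivity, ?_⟩
  intro b σ hb hσ hbσ hunit φ φ' hφ' hφ'_sq hφ
  have hb_growth := hb.norm_le_mul_one_add_norm (by linarith [norm_nonneg (σ 0)])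
  have hσ_growth := hσ.norm_le_mul_one_add_norm (by linarith [norm_nonneg (b 0)])
  have hφ_cont := continuousOn_of_eq_add_integral hT.le hφ' hφ
  have hu : MemLp (fun t => Ring.inverse (σ (φ t)) (φ' t - b (φ t))) 2
      (volume.restrict (Icc 0 T)) :=
    (ContinuousLinearMap.id ℝ _).memLp_of_bilin 2
      (((hσ.continuous.comp_continuousOn hφ_cont).ring_inverse fun t _ => hunit (φ t)
        ).memLp_top_restrict isCompact_Icc measurableSet_Icc)
      (((memLp_two_iff_integrable_sq_norm hφ'.1).2 hφ'_sq).sub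
        (((hb.continuous.comp_continuousOn hφ_cont).memLp_top_restrict isCompact_Icc
          measurableSet_Icc).mono_exponent le_top))
  have hA : 0 ≤ (1 / 2) * ∫ t in (0 : ℝ)..T, ‖Ring.inverse (σ (φ t)) (φ' t - b (φ t))‖ ^ 2 :=
    mul_nonneg (by norm_num) (intervalIntegral.integral_nonneg hT.le fun _ _ => by positivity)
  calc _ ≤ K * Real.exp ((2 * L + 2) * _) := sqrt_integral_norm_sq_le hT.le L.2 hφ' hφ hu
        fun t _ => norm_le_of_isUnit_of_linear_growth hb_growth hσ_growth (hunit (φ t)) (φ' t)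
    _ ≤ _ := by
        gcongr ?_ * Real.exp (?_ * _)
        all_goals linarith

/-- Under global Lipschitz conditions on `b`, `σ` with constant `L`,
`|b 0| + |σ 0| ≤ L`, and pointwise invertibility of `σ`, there is `C₀ > 0` depending only
on `x₀`, `T`, `L` such that `‖φ‖_{H¹} ≤ C₀ e^{C₀ A(φ)}` for all `φ ∈ H¹_{x₀}(0,T;ℝ^d)`,
where `A(φ) = ½∫₀ᵀ |σ(φ(t))⁻¹ (φ'(t) − b(φ(t)))|² dt`. -/
theorem H1_norm_bounded_by_A
    (d : ℕ) (hd : 1 ≤ d) (T : ℝ) (hT : 0 < T)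
    (x₀ : EuclideanSpace ℝ (Fin d)) (L : NNReal) (hL : 0 < L) :
    ∃ C₀ : ℝ, 0 < C₀ ∧
      ∀ (b : EuclideanSpace ℝ (Fin d) → EuclideanSpace ℝ (Fin d))
        (σ : EuclideanSpace ℝ (Fin d) →
          (EuclideanSpace ℝ (Fin d) →L[ℝ] EuclideanSpace ℝ (Fin d))),
        LipschitzWith L b → LipschitzWith L σ → ‖b 0‖ + ‖σ 0‖ ≤ (L : ℝ) →
        (∀ x, IsUnit (σ x)) →
        ∀ φ φ' : ℝ → EuclideanSpace ℝ (Fin d),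
          IntegrableOn φ' (Icc 0 T) →
          IntegrableOn (fun t => ‖φ' t‖ ^ 2) (Icc 0 T) →
          (∀ t ∈ Icc (0 : ℝ) T, φ t = x₀ + ∫ s in (0 : ℝ)..t, φ' s) →
          Real.sqrt (∫ t in (0 : ℝ)..T, ‖φ' t‖ ^ 2) ≤
            C₀ * Real.exp (C₀ * ((1 / 2) * ∫ t in (0 : ℝ)..T,
              ‖(Ring.inverse (σ (φ t))) (φ' t - b (φ t))‖ ^ 2)) :=
  H1_norm_bounded_by_A_general d T hT x₀ L
end

section
/- Let b : ℝ^d → ℝ^d and σ : ℝ^d → ℝ^{d×d} be globally Lipschitz with constant L, θ ∈ [0,1], T > 0, N ∈ ℕ⁺, h = T/N ≤ 1/(2L), and grid t_n = nh. For every continuous g : [0,T] → ℝ^m (here m = d) with g(0) = 0 there exists a unique continuous f : [0,T] → ℝ^d with f(0) = x₀ satisfying, on each interval [t_n, t_{n+1}] (n = 0,…,N−1), f(t) = f(t_n) + b((1−θ)f(t_n) + θ f(t_{n+1}))(t − t_n) + σ(f(t_n))(g(t) − g(t_n)). Moreover the solution map F^h : g ↦ f is continuous from C₀([0,T],ℝ^m)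 to C_{x₀}([0,T],ℝ^d) (both with the supremum norm); in fact, for each g₁ there is a constant K(g₁,h,x₀) such that ‖F^h(g₁) − F^h(g₂)‖₀ ≤ K(g₁,h,x₀) ‖g₁ − g₂‖₀ for all g₂ with ‖g₂ − g₁‖₀ ≤ 1. -/
open MeasureTheory Set

def IsThetaInterp (d N : ℕ) (T θ : ℝ) (x₀ : EuclideanSpace ℝ (Fin d))
    (b : EuclideanSpace ℝ (Fin d) → EuclideanSpace ℝ (Fin d))
    (σ : EuclideanSpace ℝ (Fin d) →
      (EuclideanSpace ℝ (Fin d) →L[ℝ] EuclideanSpace ℝ (Fin d)))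
    (g f : ℝ → EuclideanSpace ℝ (Fin d)) : Prop :=
  ContinuousOn f (Icc 0 T) ∧ f 0 = x₀ ∧
  ∀ n : ℕ, n < N →
    ∀ t ∈ Icc ((n : ℝ) * (T / (N : ℝ))) (((n : ℝ) + 1) * (T / (N : ℝ))),
      f t = f ((n : ℝ) * (T / (N : ℝ)))
        + (t - (n : ℝ) * (T / (N : ℝ))) •
            b ((1 - θ) • f ((n : ℝ) * (T / (N : ℝ)))
              + θ • f (((n : ℝ) + 1) * (T / (N : ℝ))))
        + (σ (f ((n : ℝ) * (T / (N : ℝ)))))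
            (g t - g ((n : ℝ) * (T / (N : ℝ))))

/-! The implicit step `y = x + h b((1 - θ) x + θ y) + c` is the fixed point of a contraction with
constant `θ h L ≤ 1/2`, so the grid values exist, and the interpolants on consecutive grid intervals
glue to a continuous path. For stability, subtracting the interpolation formulas of two solutions
and absorbing the implicit term (coefficient at most `1/2`) gives `e_{n+1} + δ ≤ C (e_n + δ)` for
the grid errors `e_n`, where `δ` bounds `‖g₁ - g₂‖` and `C` depends only on bounds for `g₁` and
`σ ∘ f₁`; so all errors are at most `C^(N+1) δ`. Uniqueness is the case `g₁ = g₂`, `δ = 0`. -/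

open scoped NNReal

section Grid

variable {h t : ℝ} {n N : ℕ}

lemma Icc_grid_subset (hh : 0 ≤ h) (hn : n < N) :
    Icc ((n : ℝ) * h) ((n + 1) * h) ⊆ Icc 0 (N * h) :=
  Icc_subset_Icc (by positivity) (by gcongr; exact_mod_cast hn)

lemma floor_div_eq_of_mem_Ico (hh : 0 < h) (ht : t ∈ Ico ((n : ℝ) * h) ((n + 1) * h)) :
    ⌊t / h⌋₊ = n := by
  rw [Nat.floor_eq_iff (div_nonneg ((by positivity : (0 : ℝ) ≤ n * h).trans ht.1) hh.le),
    le_div_iff₀ hh, div_lt_iff₀ hh]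
  exact ht

lemma exists_mem_grid_Icc (hh : 0 < h) (hN : 0 < N) (ht : t ∈ Icc 0 (N * h)) :
    ∃ n < N, t ∈ Icc ((n : ℝ) * h) ((n + 1) * h) := by
  rcases ht.2.lt_or_eq with htN | rfl
  · have hfloor : ⌊t / h⌋₊ < N := Nat.floor_lt' hN.ne' |>.2 ((div_lt_iff₀ hh).2 htN)
    refine ⟨⌊t / h⌋₊, hfloor, ?_, ?_⟩
    · exact (le_div_iff₀ hh).1 (Nat.floor_le (div_nonneg ht.1 hh.le))
    · exact ((div_lt_iff₀ hh).1 (Nat.lt_floor_add_one _)).le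
  · refine ⟨N - 1, by omega, ?_⟩
    rw [Nat.cast_sub hN, Nat.cast_one, sub_add_cancel]
    exact ⟨by nlinarith, le_rfl⟩

lemma exists_continuousOn_eqOn_grid {X : Type*} [TopologicalSpace X] (hh : 0 < h) (hN : 0 < N)
    (P : ℕ → ℝ → X) (hP : ∀ n < N, ContinuousOn (P n) (Icc ((n : ℝ) * h) ((n + 1) * h)))
    (hmatch : ∀ n, n + 1 < N → P (n + 1) ((n + 1) * h) = P n ((n + 1) * h)) :
    ∃ f : ℝ → X, ContinuousOn f (Icc 0 (N * h)) ∧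
      ∀ n < N, EqOn f (P n) (Icc ((n : ℝ) * h) ((n + 1) * h)) := by
  have hf : ∀ n < N, EqOn (fun t => P (min ⌊t / h⌋₊ (N - 1)) t) (P n)
      (Icc ((n : ℝ) * h) ((n + 1) * h)) := by
    intro n hn t ht
    dsimp only
    rcases ht.2.lt_or_eq with hlt | rfl
    · simp only [floor_div_eq_of_mem_Ico hh ⟨ht.1, hlt⟩, min_eq_left (Nat.le_sub_one_of_lt hn)]
    · rw [show ⌊((n : ℝ) + 1) * h / h⌋₊ = n + 1 by
        rw [mul_div_cancel_right₀ _ hh.ne']; exact_mod_cast Nat.floor_natCast (n + 1)]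
      rcases Nat.lt_or_ge (n + 1) N with hn1 | hn1
      · simp only [min_eq_left (Nat.le_sub_one_of_lt hn1)]
        exact_mod_cast hmatch n hn1
      · simp only [show min (n + 1) (N - 1) = n by omega]
  have hcover : Icc 0 (N * h) ⊆ ⋃ n : Fin N, Icc ((n : ℝ) * h) ((n + 1) * h) := fun t ht => by
    obtain ⟨n, hn, htn⟩ := exists_mem_grid_Icc hh hN ht
    exact mem_iUnion.2 ⟨⟨n, hn⟩, htn⟩
  refine ⟨_, ContinuousOn.mono ?_ hcover, hf⟩
  exact (locallyFinite_of_finite _).continuousOn_iUnion (fun _ => isClosed_Icc)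
    fun n => (hP n n.2).congr (hf n n.2)

end Grid

lemma IsCompact.le_iSup_of_continuousOn {X : Type*} [TopologicalSpace X] {s : Set X}
    (hs : IsCompact s) {φ : X → ℝ} (hφ : ContinuousOn φ s) {t : X} (ht : t ∈ s) :
    φ t ≤ ⨆ x : s, φ x :=
  haveI := isCompact_iff_compactSpace.1 hs
  le_ciSup (isCompact_range hφ.domRestrict).bddAbove ⟨t, ht⟩

section ThetaScheme

variable {E F : Type*} [NormedAddCommGroup E] [NormedSpace ℝ E]
  [NormedAddCommGroup F] [NormedSpace ℝ F] {b : E → E} {σ : E → F →L[ℝ] E} {L : ℝ≥0} {θ h : ℝ}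
  {N : ℕ}

def thetaInterpolant (b : E → E) (σ : E → F →L[ℝ] E) (θ s : ℝ) (x y : E) (w : F) : E :=
  x + s • b ((1 - θ) • x + θ • y) + σ x w

def SolvesThetaScheme (b : E → E) (σ : E → F →L[ℝ] E) (θ h : ℝ) (N : ℕ) (g : ℝ → F)
    (f : ℝ → E) : Prop :=
  ∀ n < N, ∀ t ∈ Icc ((n : ℝ) * h) (((n : ℝ) + 1) * h),
    f t = thetaInterpolant b σ θ (t - n * h) (f (n * h)) (f ((n + 1) * h)) (g t - g (n * h))

lemma norm_convexCombination_sub_le (hθ0 : 0 ≤ θ) (hθ1 : θ ≤ 1) (x₁ x₂ y₁ y₂ : E) :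
    ‖((1 - θ) • x₁ + θ • y₁) - ((1 - θ) • x₂ + θ • y₂)‖ ≤ ‖x₁ - x₂‖ + ‖y₁ - y₂‖ := by
  rw [show ((1 - θ) • x₁ + θ • y₁) - ((1 - θ) • x₂ + θ • y₂)
      = (1 - θ) • (x₁ - x₂) + θ • (y₁ - y₂) by simp only [smul_sub]; abel]
  refine norm_add_le_of_le ?_ ?_ <;> rw [norm_smul, Real.norm_eq_abs]
  · exact mul_le_of_le_one_left (norm_nonneg _) (abs_le.2 ⟨by linarith, by linarith⟩)
  · exact mul_le_of_le_one_left (norm_nonneg _) (abs_le.2 ⟨by linarith, by linarith⟩)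

lemma norm_apply_sub_apply_le (hσ : LipschitzWith L σ) (x₁ x₂ : E) (w₁ w₂ : F) :
    ‖σ x₁ w₁ - σ x₂ w₂‖ ≤ ‖σ x₁‖ * ‖w₁ - w₂‖ + L * ‖x₁ - x₂‖ * ‖w₂‖ := by
  rw [show σ x₁ w₁ - σ x₂ w₂ = σ x₁ (w₁ - w₂) + (σ x₁ - σ x₂) w₂ by
    simp only [map_sub, sub_apply]; abel]
  exact norm_add_le_of_le ((σ x₁).le_opNorm _)
    ((ContinuousLinearMap.le_opNorm _ _).trans (by gcongr; exact hσ.norm_sub_le x₁ x₂))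

lemma norm_thetaInterpolant_sub_le (hb : LipschitzWith L b) (hσ : LipschitzWith L σ)
    (hθ0 : 0 ≤ θ) (hθ1 : θ ≤ 1) {s : ℝ} (hs : 0 ≤ s) (x₁ x₂ y₁ y₂ : E) (w₁ w₂ : F) :
    ‖thetaInterpolant b σ θ s x₁ y₁ w₁ - thetaInterpolant b σ θ s x₂ y₂ w₂‖ ≤
      (1 + L * ‖w₂‖) * ‖x₁ - x₂‖ + s * L * (‖x₁ - x₂‖ + ‖y₁ - y₂‖)
        + ‖σ x₁‖ * ‖w₁ - w₂‖ := by
  have hdrift := hb.norm_sub_le_of_le (norm_convexCombination_sub_le hθ0 hθ1 x₁ x₂ y₁ y₂)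
  have hdiff := norm_apply_sub_apply_le hσ x₁ x₂ w₁ w₂
  unfold thetaInterpolant
  rw [show x₁ + s • b ((1 - θ) • x₁ + θ • y₁) + σ x₁ w₁
      - (x₂ + s • b ((1 - θ) • x₂ + θ • y₂) + σ x₂ w₂)
      = (x₁ - x₂) + s • (b ((1 - θ) • x₁ + θ • y₁) - b ((1 - θ) • x₂ + θ • y₂))
        + (σ x₁ w₁ - σ x₂ w₂) by rw [smul_sub]; abel]
  refine norm_add₃_le.trans ?_
  rw [norm_smul, Real.norm_eq_abs, abs_of_nonneg hs]
  have := mul_le_mul_of_nonneg_left hdrift hs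
  linarith

lemma exists_eq_thetaInterpolant [CompleteSpace E] (hb : LipschitzWith L b)
    (hK : ‖h * θ‖₊ * L < 1) (x : E) (w : F) : ∃ y, y = thetaInterpolant b σ θ h x y w := by
  have hlip : LipschitzWith (‖h * θ‖₊ * L) (fun y => thetaInterpolant b σ θ h x y w) := by
    refine LipschitzWith.of_dist_le_mul fun y z => ?_
    simp only [thetaInterpolant, dist_add_right, dist_add_left]
    calc dist (h • b ((1 - θ) • x + θ • y)) (h • b ((1 - θ) • x + θ • z))
        ≤ ‖h‖ * (L * dist ((1 - θ) • x + θ • y) ((1 - θ) • x + θ • z)) :=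
          (dist_smul_le _ _ _).trans (by gcongr; exact hb.dist_le_mul _ _)
      _ ≤ ‖h‖ * (L * (‖θ‖ * dist y z)) := by
          rw [dist_add_left]; gcongr; exact dist_smul_le _ _ _
      _ = ‖h * θ‖₊ * L * dist y z := by push_cast; rw [norm_mul]; ring
  exact ⟨_, (ContractingWith.fixedPoint_isFixedPt ⟨hK, hlip⟩).symm⟩

lemma exists_thetaScheme_seq [CompleteSpace E] (hb : LipschitzWith L b)
    (hK : ‖h * θ‖₊ * L < 1) (x₀ : E) (w : ℕ → F) :
    ∃ y : ℕ → E, y 0 = x₀ ∧ ∀ n, y (n + 1) = thetaInterpolant b σ θ h (y n) (y (n + 1)) (w n) := by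
  choose step hstep using fun n x => exists_eq_thetaInterpolant (σ := σ) hb hK x (w n)
  exact ⟨fun n => Nat.rec x₀ step n, rfl, fun n => hstep n _⟩

lemma exists_solvesThetaScheme [CompleteSpace E] (hb : LipschitzWith L b) (hh : 0 < h)
    (hK : ‖h * θ‖₊ * L < 1) (hN : 0 < N) (x₀ : E) {g : ℝ → F}
    (hg : ContinuousOn g (Icc 0 (N * h))) :
    ∃ f : ℝ → E, ContinuousOn f (Icc 0 (N * h)) ∧ f 0 = x₀ ∧ SolvesThetaScheme b σ θ h N g f := by
  obtain ⟨y, hy0, hy⟩ := exists_thetaScheme_seq (σ := σ) hb hK x₀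
    fun n => g ((n + 1) * h) - g (n * h)
  set P : ℕ → ℝ → E := fun n t =>
    thetaInterpolant b σ θ (t - n * h) (y n) (y (n + 1)) (g t - g (n * h)) with hP
  have hP_left : ∀ n : ℕ, P n (n * h) = y n := fun n => by simp [hP, thetaInterpolant]
  have hP_right : ∀ n : ℕ, P n ((n + 1) * h) = y (n + 1) := fun n => by
    simp only [hP, show ((n : ℝ) + 1) * h - n * h = h by ring]
    exact (hy n).symm
  have hPc : ∀ n < N, ContinuousOn (P n) (Icc ((n : ℝ) * h) ((n + 1) * h)) := fun n hn => by
    have := hg.mono (Icc_grid_subset hh.le hn)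
    simp only [hP, thetaInterpolant]
    fun_prop
  obtain ⟨f, hfc, hfP⟩ := exists_continuousOn_eqOn_grid hh hN P hPc fun n _ => by
    rw [hP_right]; exact_mod_cast hP_left (n + 1)
  have hf_left : ∀ n < N, f (n * h) = y n := fun n hn =>
    (hfP n hn ⟨le_rfl, by nlinarith⟩).trans (hP_left n)
  have hf_right : ∀ n < N, f ((n + 1) * h) = y (n + 1) := fun n hn =>
    (hfP n hn ⟨by nlinarith, le_rfl⟩).trans (hP_right n)
  refine ⟨f, hfc, by simpa [hy0] using hf_left 0 hN, fun n hn t ht => ?_⟩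
  rw [hfP n hn ht, hf_left n hn, hf_right n hn]

variable {g₁ g₂ : ℝ → F} {f₁ f₂ : ℝ → E} {G M δ : ℝ}

lemma SolvesThetaScheme.norm_sub_le_of_mem_grid_Icc (hb : LipschitzWith L b)
    (hσ : LipschitzWith L σ) (hθ0 : 0 ≤ θ) (hθ1 : θ ≤ 1) (hh : 0 ≤ h) (hhL : h * L ≤ 1 / 2)
    (hf₁ : SolvesThetaScheme b σ θ h N g₁ f₁) (hf₂ : SolvesThetaScheme b σ θ h N g₂ f₂)
    (hG : ∀ t ∈ Icc 0 (N * h), ‖g₂ t‖ ≤ G) (hM : ∀ t ∈ Icc 0 (N * h), ‖σ (f₁ t)‖ ≤ M)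
    (hδ : ∀ t ∈ Icc 0 (N * h), ‖g₁ t - g₂ t‖ ≤ δ) {n : ℕ} (hn : n < N) {t : ℝ}
    (ht : t ∈ Icc ((n : ℝ) * h) ((n + 1) * h)) :
    ‖f₁ t - f₂ t‖ ≤ (1 + 2 * L * G) * ‖f₁ (n * h) - f₂ (n * h)‖
      + (‖f₁ (n * h) - f₂ (n * h)‖ + ‖f₁ ((n + 1) * h) - f₂ ((n + 1) * h)‖) / 2
      + 2 * M * δ := by
  have htS := Icc_grid_subset hh hn ht
  have hnS := Icc_grid_subset hh hn ⟨le_rfl, by nlinarith⟩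
  have hs : 0 ≤ t - n * h := sub_nonneg.2 ht.1
  have hsL : (t - n * h) * L ≤ 1 / 2 :=
    le_trans (mul_le_mul_of_nonneg_right (by linarith [ht.2]) L.coe_nonneg) hhL
  have hw₂ : ‖g₂ t - g₂ (n * h)‖ ≤ 2 * G :=
    (norm_sub_le _ _).trans (by linarith [hG t htS, hG _ hnS])
  have hw : ‖(g₁ t - g₁ (n * h)) - (g₂ t - g₂ (n * h))‖ ≤ 2 * δ := by
    rw [sub_sub_sub_comm]
    exact (norm_sub_le _ _).trans (by linarith [hδ t htS, hδ _ hnS])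
  rw [hf₁ n hn t ht, hf₂ n hn t ht]
  refine (norm_thetaInterpolant_sub_le hb hσ hθ0 hθ1 hs _ _ _ _ _ _).trans ?_
  have hcoef := mul_le_mul_of_nonneg_right (mul_le_mul_of_nonneg_left hw₂ L.coe_nonneg)
    (norm_nonneg (f₁ (n * h) - f₂ (n * h)))
  have hdrift := mul_le_mul_of_nonneg_right hsL (add_nonneg (norm_nonneg (f₁ (n * h) - f₂ (n * h)))
    (norm_nonneg (f₁ ((n + 1) * h) - f₂ ((n + 1) * h))))
  have hnoise := mul_le_mul (hM _ hnS) hw (norm_nonneg _) ((norm_nonneg _).trans (hM _ hnS))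
  linarith

lemma SolvesThetaScheme.norm_sub_grid_add_le_pow (hb : LipschitzWith L b)
    (hσ : LipschitzWith L σ) (hθ0 : 0 ≤ θ) (hθ1 : θ ≤ 1) (hh : 0 ≤ h) (hhL : h * L ≤ 1 / 2)
    (hf₁ : SolvesThetaScheme b σ θ h N g₁ f₁) (hf₂ : SolvesThetaScheme b σ θ h N g₂ f₂)
    (h0 : f₁ 0 = f₂ 0)
    (hG : ∀ t ∈ Icc 0 (N * h), ‖g₂ t‖ ≤ G) (hM : ∀ t ∈ Icc 0 (N * h), ‖σ (f₁ t)‖ ≤ M)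
    (hδ : ∀ t ∈ Icc 0 (N * h), ‖g₁ t - g₂ t‖ ≤ δ) :
    ∀ n ≤ N, ‖f₁ (n * h) - f₂ (n * h)‖ + δ ≤ (4 + 4 * L * G + 4 * M) ^ n * δ := by
  have h0S : (0 : ℝ) ∈ Icc 0 (N * h) := ⟨le_rfl, by positivity⟩
  have hG0 := (norm_nonneg _).trans (hG 0 h0S)
  have hM0 := (norm_nonneg _).trans (hM 0 h0S)
  have hδ0 := (norm_nonneg _).trans (hδ 0 h0S)
  intro n hn
  induction n with
  | zero => simp [h0]
  | succ n ih =>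
    have hstep := hf₁.norm_sub_le_of_mem_grid_Icc hb hσ hθ0 hθ1 hh hhL hf₂ hG hM hδ hn
      (t := (n + 1) * h) ⟨by nlinarith, le_rfl⟩
    push_cast
    calc ‖f₁ ((n + 1) * h) - f₂ ((n + 1) * h)‖ + δ
        ≤ (4 + 4 * L * G + 4 * M) * (‖f₁ (n * h) - f₂ (n * h)‖ + δ) := by
          nlinarith [norm_nonneg (f₁ (n * h) - f₂ (n * h)),
            mul_nonneg (mul_nonneg L.coe_nonneg hG0) hδ0]
      _ ≤ (4 + 4 * L * G + 4 * M) * ((4 + 4 * L * G + 4 * M) ^ n * δ) := by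
          gcongr
          exact ih (by omega)
      _ = (4 + 4 * L * G + 4 * M) ^ (n + 1) * δ := by ring

lemma SolvesThetaScheme.norm_sub_le_pow_mul (hb : LipschitzWith L b)
    (hσ : LipschitzWith L σ) (hθ0 : 0 ≤ θ) (hθ1 : θ ≤ 1) (hh : 0 < h) (hhL : h * L ≤ 1 / 2)
    (hN : 0 < N) (hf₁ : SolvesThetaScheme b σ θ h N g₁ f₁)
    (hf₂ : SolvesThetaScheme b σ θ h N g₂ f₂) (h0 : f₁ 0 = f₂ 0)
    (hG : ∀ t ∈ Icc 0 (N * h), ‖g₂ t‖ ≤ G) (hM : ∀ t ∈ Icc 0 (N * h), ‖σ (f₁ t)‖ ≤ M)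
    (hδ : ∀ t ∈ Icc 0 (N * h), ‖g₁ t - g₂ t‖ ≤ δ) {t : ℝ} (ht : t ∈ Icc 0 (N * h)) :
    ‖f₁ t - f₂ t‖ ≤ (4 + 4 * L * G + 4 * M) ^ (N + 1) * δ := by
  set C := 4 + 4 * L * G + 4 * M
  have h0S : (0 : ℝ) ∈ Icc 0 (N * h) := ⟨le_rfl, by positivity⟩
  have hG0 := (norm_nonneg _).trans (hG 0 h0S)
  have hM0 := (norm_nonneg _).trans (hM 0 h0S)
  have hδ0 := (norm_nonneg _).trans (hδ 0 h0S)
  have hC : 1 ≤ C := by nlinarith [mul_nonneg L.coe_nonneg hG0]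
  have hgrid : ∀ k ≤ N, ‖f₁ (k * h) - f₂ (k * h)‖ ≤ C ^ N * δ := fun k hk => by
    have := hf₁.norm_sub_grid_add_le_pow hb hσ hθ0 hθ1 hh.le hhL hf₂ h0 hG hM hδ k hk
    have := mul_le_mul_of_nonneg_right (pow_le_pow_right₀ hC hk) hδ0
    linarith
  obtain ⟨n, hn, htn⟩ := exists_mem_grid_Icc hh hN ht
  have hstep := hf₁.norm_sub_le_of_mem_grid_Icc hb hσ hθ0 hθ1 hh.le hhL hf₂ hG hM hδ hn htn
  have hn₀ := hgrid n hn.le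
  have hn₁ := hgrid (n + 1) hn
  push_cast at hn₁
  have hCN : δ ≤ C ^ N * δ := le_mul_of_one_le_left hδ0 (one_le_pow₀ hC)
  rw [pow_succ]
  nlinarith [mul_le_mul_of_nonneg_left hn₀ (by positivity : (0 : ℝ) ≤ 1 + 2 * L * G),
    mul_le_mul_of_nonneg_left hCN hM0]

theorem SolvesThetaScheme.exists_stability_bound (hb : LipschitzWith L b)
    (hσ : LipschitzWith L σ) (hθ0 : 0 ≤ θ) (hθ1 : θ ≤ 1) (hh : 0 < h) (hhL : h * L ≤ 1 / 2)
    (hN : 0 < N) (hg₁ : ContinuousOn g₁ (Icc 0 (N * h))) (hf₁c : ContinuousOn f₁ (Icc 0 (N * h)))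
    (hf₁ : SolvesThetaScheme b σ θ h N g₁ f₁) :
    ∃ K > 0, ∀ (g₂ : ℝ → F) (f₂ : ℝ → E) (δ : ℝ), SolvesThetaScheme b σ θ h N g₂ f₂ →
      f₂ 0 = f₁ 0 → (∀ t ∈ Icc 0 (N * h), ‖g₁ t - g₂ t‖ ≤ δ) → δ ≤ 1 →
        ∀ t ∈ Icc 0 (N * h), ‖f₁ t - f₂ t‖ ≤ K * δ := by
  have h0S : (0 : ℝ) ∈ Icc 0 (N * h) := ⟨le_rfl, by positivity⟩
  obtain ⟨G, hG⟩ := isCompact_Icc.exists_bound_of_continuousOn hg₁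
  obtain ⟨M, hM⟩ := isCompact_Icc.exists_bound_of_continuousOn
    (hσ.continuous.comp_continuousOn hf₁c)
  have hG0 := (norm_nonneg _).trans (hG 0 h0S)
  have hM0 := (norm_nonneg _).trans (hM 0 h0S)
  refine ⟨(4 + 4 * L * (G + 1) + 4 * M) ^ (N + 1), by positivity,
    fun g₂ f₂ δ hf₂ h0 hδ hδ1 t ht => ?_⟩
  have hG₂ : ∀ t ∈ Icc 0 (N * h), ‖g₂ t‖ ≤ G + 1 := fun t ht =>
    (norm_le_norm_add_norm_sub _ _).trans (by linarith [hG t ht, hδ t ht])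
  exact hf₁.norm_sub_le_pow_mul hb hσ hθ0 hθ1 hh hhL hN hf₂ h0.symm hG₂ hM hδ ht

end ThetaScheme

lemma isThetaInterp_iff {d N : ℕ} {T θ : ℝ} {x₀ : EuclideanSpace ℝ (Fin d)}
    {b : EuclideanSpace ℝ (Fin d) → EuclideanSpace ℝ (Fin d)}
    {σ : EuclideanSpace ℝ (Fin d) → (EuclideanSpace ℝ (Fin d) →L[ℝ] EuclideanSpace ℝ (Fin d))}
    {g f : ℝ → EuclideanSpace ℝ (Fin d)} :
    IsThetaInterp d N T θ x₀ b σ g f ↔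
      ContinuousOn f (Icc 0 T) ∧ f 0 = x₀ ∧ SolvesThetaScheme b σ θ (T / N) N g f :=
  Iff.rfl

theorem theta_method_solution_map_continuous_general
    (d : ℕ) (T : ℝ) (hT : 0 < T)
    (x₀ : EuclideanSpace ℝ (Fin d)) (L : NNReal)
    (θ : ℝ) (hθ0 : 0 ≤ θ) (hθ1 : θ ≤ 1)
    (b : EuclideanSpace ℝ (Fin d) → EuclideanSpace ℝ (Fin d))
    (σ : EuclideanSpace ℝ (Fin d) →
      (EuclideanSpace ℝ (Fin d) →L[ℝ] EuclideanSpace ℝ (Fin d)))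
    (hb : LipschitzWith L b) (hσ : LipschitzWith L σ)
    (N : ℕ) (hN : 0 < N) (hh : T / (N : ℝ) ≤ 1 / (2 * (L : ℝ))) :
    (∀ g : ℝ → EuclideanSpace ℝ (Fin d),
      ContinuousOn g (Icc 0 T) → g 0 = 0 →
      ∃ f : ℝ → EuclideanSpace ℝ (Fin d), IsThetaInterp d N T θ x₀ b σ g f ∧
        ∀ f₂ : ℝ → EuclideanSpace ℝ (Fin d), IsThetaInterp d N T θ x₀ b σ g f₂ →
          EqOn f₂ f (Icc 0 T)) ∧
    (∀ g₁ f₁ : ℝ → EuclideanSpace ℝ (Fin d),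
      ContinuousOn g₁ (Icc 0 T) → g₁ 0 = 0 → IsThetaInterp d N T θ x₀ b σ g₁ f₁ →
      ∃ K : ℝ, 0 < K ∧
        ∀ g₂ f₂ : ℝ → EuclideanSpace ℝ (Fin d),
          ContinuousOn g₂ (Icc 0 T) → g₂ 0 = 0 → IsThetaInterp d N T θ x₀ b σ g₂ f₂ →
          (⨆ s : Icc (0 : ℝ) T, ‖g₂ s.1 - g₁ s.1‖) ≤ 1 →
          ∀ t ∈ Icc (0 : ℝ) T,
            ‖f₁ t - f₂ t‖ ≤ K * ⨆ s : Icc (0 : ℝ) T, ‖g₁ s.1 - g₂ s.1‖) := by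
  simp only [isThetaInterp_iff]
  set h := T / N with h_def
  have hh0 : 0 < h := by positivity
  have hNh : (N : ℝ) * h = T := by rw [h_def]; field_simp
  have hhL : h * L ≤ 1 / 2 := by
    rcases L.coe_nonneg.eq_or_lt with hL | hL
    · simp [← hL]
    · calc h * L ≤ 1 / (2 * L) * L := by gcongr
        _ = 1 / 2 := by field_simp
  have hK : ‖h * θ‖₊ * L < 1 := by
    rw [← NNReal.coe_lt_coe]
    push_cast
    rw [norm_mul, Real.norm_of_nonneg hh0.le, Real.norm_of_nonneg hθ0]
    nlinarith [mul_nonneg hh0.le L.coe_nonneg]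
  have stable := fun g₁ f₁ (hg₁ : ContinuousOn g₁ (Icc 0 T))
      (hf₁ : ContinuousOn f₁ (Icc 0 T) ∧ f₁ 0 = x₀ ∧ SolvesThetaScheme b σ θ h N g₁ f₁) =>
    hf₁.2.2.exists_stability_bound hb hσ hθ0 hθ1 hh0 hhL hN (hNh ▸ hg₁) (hNh ▸ hf₁.1)
  refine ⟨fun g hg _ => ?_, fun g₁ f₁ hg₁ _ hf₁ => ?_⟩
  · obtain ⟨f, hfc, hf0, hf⟩ := exists_solvesThetaScheme (σ := σ) hb hh0 hK hN x₀ (hNh ▸ hg)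
    refine ⟨f, ⟨hNh ▸ hfc, hf0, hf⟩, fun f₂ hf₂ t ht => ?_⟩
    obtain ⟨K, -, hK⟩ := stable g f hg ⟨hNh ▸ hfc, hf0, hf⟩
    have := hK g f₂ 0 hf₂.2.2 (hf₂.2.1.trans hf0.symm) (by simp) zero_le_one t (hNh ▸ ht)
    simpa [sub_eq_zero, eq_comm] using this
  · obtain ⟨K, hK0, hK⟩ := stable g₁ f₁ hg₁ hf₁
    refine ⟨K, hK0, fun g₂ f₂ hg₂ _ hf₂ hclose t ht =>
      hK g₂ f₂ (⨆ s : Icc (0 : ℝ) T, ‖g₁ s.1 - g₂ s.1‖) hf₂.2.2 (hf₂.2.1.trans hf₁.2.1.symm)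
        (fun s hs => isCompact_Icc.le_iSup_of_continuousOn (φ := fun s => ‖g₁ s - g₂ s‖)
          (hg₁.sub hg₂).norm (hNh ▸ hs)) ?_ t (hNh ▸ ht)⟩
    simpa only [norm_sub_rev] using hclose

/-- For `h = T/N ≤ 1/(2L)`, for every continuous `g` with `g(0) = 0` there
is a unique continuous `f` with `f(0) = x₀` solving the θ-method interpolation equation
driven by `g`; moreover the solution map `F^h : g ↦ f` is locally Lipschitz (hence
continuous) in the supremum norm: for each admissible `g₁` there is `K(g₁,h,x₀)` with
`‖F^h(g₁) − F^h(g₂)‖₀ ≤ K ‖g₁ − g₂‖₀` whenever `‖g₂ − g₁‖₀ ≤ 1`. -/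
theorem theta_method_solution_map_continuous
    (d : ℕ) (hd : 1 ≤ d) (T : ℝ) (hT : 0 < T)
    (x₀ : EuclideanSpace ℝ (Fin d)) (L : NNReal) (hL : 0 < L)
    (θ : ℝ) (hθ0 : 0 ≤ θ) (hθ1 : θ ≤ 1)
    (b : EuclideanSpace ℝ (Fin d) → EuclideanSpace ℝ (Fin d))
    (σ : EuclideanSpace ℝ (Fin d) →
      (EuclideanSpace ℝ (Fin d) →L[ℝ] EuclideanSpace ℝ (Fin d)))
    (hb : LipschitzWith L b) (hσ : LipschitzWith L σ)
    (N : ℕ) (hN : 0 < N) (hh : T / (N : ℝ) ≤ 1 / (2 * (L : ℝ))) :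
    (∀ g : ℝ → EuclideanSpace ℝ (Fin d),
      ContinuousOn g (Icc 0 T) → g 0 = 0 →
      ∃ f : ℝ → EuclideanSpace ℝ (Fin d), IsThetaInterp d N T θ x₀ b σ g f ∧
        ∀ f₂ : ℝ → EuclideanSpace ℝ (Fin d), IsThetaInterp d N T θ x₀ b σ g f₂ →
          EqOn f₂ f (Icc 0 T)) ∧
    (∀ g₁ f₁ : ℝ → EuclideanSpace ℝ (Fin d),
      ContinuousOn g₁ (Icc 0 T) → g₁ 0 = 0 → IsThetaInterp d N T θ x₀ b σ g₁ f₁ →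
      ∃ K : ℝ, 0 < K ∧
        ∀ g₂ f₂ : ℝ → EuclideanSpace ℝ (Fin d),
          ContinuousOn g₂ (Icc 0 T) → g₂ 0 = 0 → IsThetaInterp d N T θ x₀ b σ g₂ f₂ →
          (⨆ s : Icc (0 : ℝ) T, ‖g₂ s.1 - g₁ s.1‖) ≤ 1 →
          ∀ t ∈ Icc (0 : ℝ) T,
            ‖f₁ t - f₂ t‖ ≤ K * ⨆ s : Icc (0 : ℝ) T, ‖g₁ s.1 - g₂ s.1‖) :=
  theta_method_solution_map_continuous_general d T hT x₀ L θ hθ0 hθ1 b σ hb hσ N hN hh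
end
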